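/- Let C = x_1 y_1 x_2 y_2 ⋯ x_r y_r x_1 be a feasible cycle with M(C) = {x_i y_i : 1 ≤ i ≤ r} (so C contains exactly r edges of M), and let xy ∈ M_0 be an edge with x, y ∉ V(C) such that e({x,y}, C) ≥ r + 1. Then the subgraph induced by V(C) ∪ {x, y} contains a feasible cycle C′ with M_0(C′) = M_0(C) ∪ {xy}. -/

import Mathlib

/-- `e(S, T)`: the number of edges of `G` with one end in `S` and the other in `T`. -/
noncomputable def eBtw {V : Type*} (G : SimpleGraph V) (S T : Set V) : ℕ :=
  {e : Sym2 V | e ∈ G.edgeSet ∧ ∃ a b, e = s(a, b) ∧ a ∈ S ∧ b ∈ T}.ncard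

/-- The set of vertices `{xᵢ, yᵢ : i ∈ F}` corresponding to a set `F` of matching
indices; here `Sum.inl i` plays the role of `xᵢ ∈ X` and `Sum.inr i` of `yᵢ ∈ Y`. -/
def iVerts {α : Type*} (F : Set α) : Set (α ⊕ α) :=
  {w | ∃ i ∈ F, w = Sum.inl i ∨ w = Sum.inr i}

/-- An `M`-alternating cycle `x_{i₁} y_{i₁} x_{i₂} y_{i₂} ⋯ x_{i_r} y_{i_r} x_{i₁}`
(where `M = {xᵢyᵢ}` is the perfect matching), encoded by its list of matching
indices `i₁, …, i_r`: consecutive (cyclically) indices are joined by the non-matching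
edges `y_{i_j} x_{i_{j+1}}`.  Such a cycle has `2 * l.length` edges, `l.length` of
which are matching edges. -/
def AltCycle {α : Type*} (G : SimpleGraph (α ⊕ α)) (l : List α) : Prop :=
  2 ≤ l.length ∧ l.Nodup ∧
    ∀ i : Fin l.length,
      G.Adj (Sum.inr (l.get i))
        (Sum.inl (l.get ⟨((i : ℕ) + 1) % l.length, Nat.mod_lt _ i.pos⟩))

/-- An `M`-alternating path `x_{i₁} y_{i₁} ⋯ x_{i_r} y_{i_r}` beginning and ending
with matching edges, encoded by its list of matching indices. -/
def AltPath {α : Type*} (G : SimpleGraph (α ⊕ α)) (l : List α) : Prop :=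
  l ≠ [] ∧ l.Nodup ∧ l.Chain' (fun a b => G.Adj (Sum.inr a) (Sum.inl b))

/-- A feasible path: an `M`-alternating path `x_{i₁} y_{i₁} ⋯ x_{i_r} y_{i_r}` whose
end-vertices `x_{i₁}` and `y_{i_r}` belong to `V(M₀)`, where `S` is the index set of
`M₀ ⊆ M`. -/
def FeasPath {α : Type*} [DecidableEq α] (G : SimpleGraph (α ⊕ α)) (S : Finset α)
    (l : List α) : Prop :=
  AltPath G l ∧ ∀ h : l ≠ [], l.head h ∈ S ∧ l.getLast h ∈ S



/-!
Since `G` is bipartite, every edge from `x_a` to `C` ends at some `y_{l_j}` and every edge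
from `y_a` to `C` at some `x_{l_{j+1}}`. Counting both kinds by the position `j` along the cycle,
`r + 1` edges force, by pigeonhole over the `r` positions, a `j` with `x_a ~ y_{l_j}` and
`y_a ~ x_{l_{j+1}}`. Replacing the edge `y_{l_j} x_{l_{j+1}}` of `C` by the path
`y_{l_j} x_a y_a x_{l_{j+1}}` gives `C′`.
-/

open Finset

section AltCycle

variable {α : Type*} {G : SimpleGraph (α ⊕ α)} {l : List α} {a : α}

theorem AltCycle.rotate (hC : AltCycle G l) (k : ℕ) : AltCycle G (l.rotate k) := by
  obtain ⟨hlen, hnd, hadj⟩ := hC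
  refine ⟨by simpa using hlen, List.nodup_rotate.mpr hnd, fun i => ?_⟩
  have hidx : ((i + 1) % l.length + k) % l.length = ((i + k) % l.length + 1) % l.length := by
    simp only [Nat.mod_add_mod, Nat.add_right_comm]
  simpa only [List.get_eq_getElem, List.getElem_rotate, List.length_rotate, hidx] using
    hadj ⟨(i + k) % l.length, Nat.mod_lt _ (by omega)⟩

theorem AltCycle.append_singleton (hC : AltCycle G l) (ha : a ∉ l) (hl : l ≠ [])
    (hlast : G.Adj (Sum.inr (l.getLast hl)) (Sum.inl a))
    (hhead : G.Adj (Sum.inr a) (Sum.inl (l.head hl))) : AltCycle G (l ++ [a]) := by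
  obtain ⟨hlen, hnd, hadj⟩ := hC
  refine ⟨by simp only [List.length_append, List.length_singleton]; omega,
    List.nodup_append.mpr ⟨hnd, List.nodup_singleton a, ?_⟩, ?_⟩
  · simp only [List.mem_singleton]
    rintro b hb _ rfl rfl
    exact ha hb
  rintro ⟨i, hi⟩
  simp only [List.length_append, List.length_singleton] at hi
  simp only [List.get_eq_getElem, List.getElem_append, List.length_append, List.length_singleton,
    List.getElem_singleton]
  rcases lt_trichotomy (i + 1) l.length with h | h | h
  · simpa [Nat.mod_eq_of_lt h, Nat.mod_eq_of_lt (show i + 1 < l.length + 1 by omega), h,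
      show i < l.length by omega] using hadj ⟨i, by omega⟩
  · simpa [h, List.getLast_eq_getElem, show l.length - 1 = i by omega,
      show i < l.length by omega] using hlast
  · obtain rfl : i = l.length := by omega
    simpa [List.head_eq_getElem, show 0 < l.length by omega] using hhead

-- Rotating by `j + 1` puts `l[j]` last and `l[j + 1]` first, so appending `a` inserts it
-- between them.
theorem AltCycle.rotate_append_singleton (hC : AltCycle G l) (ha : a ∉ l) {j : ℕ}
    (hj : j < l.length) (h₁ : G.Adj (Sum.inr l[j]) (Sum.inl a))
    (h₂ : G.Adj (Sum.inr a)
      (Sum.inl (l[(j + 1) % l.length]'(Nat.mod_lt _ (Nat.zero_lt_of_lt hj))))) :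
    AltCycle G (l.rotate (j + 1) ++ [a]) := by
  have hl : l.rotate (j + 1) ≠ [] := by
    rw [Ne, List.rotate_eq_nil_iff]
    rintro rfl
    simp at hj
  refine (hC.rotate (j + 1)).append_singleton (by rwa [List.mem_rotate]) hl ?_ ?_
  · simp only [List.getLast_eq_getElem, List.getElem_rotate, List.length_rotate]
    convert h₁ using 4
    rw [show l.length - 1 + (j + 1) = j + l.length by omega, Nat.add_mod_right,
      Nat.mod_eq_of_lt hj]
  · simpa [List.head_eq_getElem] using h₂

end AltCycle

theorem List.Nodup.exists_getElem_and_getElem_succ {α : Type*} [DecidableEq α] {l : List α}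
    (hl : l.Nodup)
    {A B : α → Prop} [DecidablePred A] [DecidablePred B]
    (h : l.length < #{i ∈ l.toFinset | A i} + #{i ∈ l.toFinset | B i}) :
    ∃ j, ∃ hj : j < l.length, A l[j] ∧
      B (l[(j + 1) % l.length]'(Nat.mod_lt _ (Nat.zero_lt_of_lt hj))) := by
  have hcard (σ : Equiv.Perm (Fin l.length)) (P : α → Prop) [DecidablePred P] :
      #{i ∈ l.toFinset | P i} = #{k | P (l.get (σ k))} := by
    have himage : univ.image (l.get ∘ σ) = l.toFinset := by
      ext x
      rw [List.mem_toFinset, List.mem_iff_get]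
      simp only [mem_image, mem_univ, true_and, Function.comp_apply]
      exact (σ.surjective.exists (p := fun k => l.get k = x)).symm
    rw [← himage, filter_image,
      card_image_of_injective _ ((List.nodup_iff_injective_get.mp hl).comp σ.injective)]
    rfl
  have : NeZero l.length := ⟨fun h0 => by simp [List.length_eq_zero_iff.mp h0] at h⟩
  have hA : #{i ∈ l.toFinset | A i} = #{k : Fin l.length | A (l.get k)} := hcard (.refl _) A
  have hB : #{i ∈ l.toFinset | B i} = #{k : Fin l.length | B (l.get (finRotate _ k))} :=
    hcard _ B
  obtain ⟨k, hk⟩ := inter_nonempty_of_card_lt_card_add_card (subset_univ {k | A (l.get k)})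
    (subset_univ {k | B (l.get (finRotate _ k))})
    (by rwa [card_univ, Fintype.card_fin, ← hA, ← hB])
  simp only [mem_inter, mem_filter_univ, finRotate_apply] at hk
  refine ⟨k, k.2, hk.1, ?_⟩
  convert hk.2 using 2
  simp [Fin.val_add]

theorem eBtw_le_card_filter_add_card_filter {α : Type*} {G : SimpleGraph (α ⊕ α)}
    [DecidableRel G.Adj]
    (hX : ∀ i j, ¬ G.Adj (Sum.inl i) (Sum.inl j)) (hY : ∀ i j, ¬ G.Adj (Sum.inr i) (Sum.inr j))
    (a : α) (F : Finset α) :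
    eBtw G {Sum.inl a, Sum.inr a} (iVerts ↑F) ≤
      #{i ∈ F | G.Adj (Sum.inl a) (Sum.inr i)} + #{i ∈ F | G.Adj (Sum.inr a) (Sum.inl i)} := by
  classical
  set EX := {i ∈ F | G.Adj (Sum.inl a) (Sum.inr i)}.image (s(Sum.inl a, Sum.inr ·))
  set EY := {i ∈ F | G.Adj (Sum.inr a) (Sum.inl i)}.image (s(Sum.inr a, Sum.inl ·))
  have hsub : {e | e ∈ G.edgeSet ∧ ∃ u v, e = s(u, v) ∧
      u ∈ ({Sum.inl a, Sum.inr a} : Set (α ⊕ α)) ∧ v ∈ iVerts ↑F} ⊆ ↑(EX ∪ EY) := by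
    rintro e ⟨he, u, v, rfl, hu, i, hi, hv⟩
    rw [SimpleGraph.mem_edgeSet] at he
    simp only [Set.mem_insert_iff, Set.mem_singleton_iff] at hu
    rcases hu with rfl | rfl <;> rcases hv with rfl | rfl
    · exact absurd he (hX a i)
    · exact mem_union_left _ (mem_image_of_mem _ (mem_filter.mpr ⟨hi, he⟩))
    · exact mem_union_right _ (mem_image_of_mem _ (mem_filter.mpr ⟨hi, he⟩))
    · exact absurd he (hY a i)
  calc eBtw G {Sum.inl a, Sum.inr a} (iVerts ↑F)
      ≤ #(EX ∪ EY) :=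
        (Set.ncard_le_ncard hsub (finite_toSet _)).trans_eq (Set.ncard_coe_finset _)
    _ ≤ _ := (card_union_le _ _).trans (add_le_add card_image_le card_image_le)

theorem stmt4_general (n : ℕ) (G : SimpleGraph (Fin n ⊕ Fin n))
    (hX : ∀ i j : Fin n, ¬ G.Adj (Sum.inl i) (Sum.inl j))
    (hY : ∀ i j : Fin n, ¬ G.Adj (Sum.inr i) (Sum.inr j))
    (S : Finset (Fin n))
    (l : List (Fin n)) (hC : AltCycle G l)
    (a : Fin n) (haS : a ∈ S) (hal : a ∉ l)
    (he : l.length + 1 ≤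
      eBtw G ({Sum.inl a, Sum.inr a} : Set (Fin n ⊕ Fin n)) (iVerts {i | i ∈ l})) :
    ∃ l' : List (Fin n), AltCycle G l' ∧
      (∀ b ∈ l', b ∈ l ∨ b = a) ∧
      l'.toFinset ∩ S = insert a (l.toFinset ∩ S) := by
  classical
  have hcount := eBtw_le_card_filter_add_card_filter hX hY a l.toFinset
  rw [List.coe_toFinset] at hcount
  obtain ⟨j, hj, hA, hB⟩ := hC.2.1.exists_getElem_and_getElem_succ
    (A := fun i => G.Adj (Sum.inl a) (Sum.inr i)) (B := fun i => G.Adj (Sum.inr a) (Sum.inl i))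
    (by omega)
  refine ⟨l.rotate (j + 1) ++ [a], hC.rotate_append_singleton hal hj hA.symm hB, ?_, ?_⟩
  · simp [List.mem_rotate]
  · have hset : (l.rotate (j + 1) ++ [a]).toFinset = insert a l.toFinset := by
      ext x
      simp [List.mem_rotate]
    rw [hset, insert_inter_of_mem haS]

/-- **Lemma 1.** If `C = x₁y₁⋯x_ry_rx₁` is a feasible cycle (an `M`-alternating cycle
with at least two `M₀`-edges, encoded by its index list `l`, `r = l.length`) and
`xy = x_a y_a ∈ M₀` is an edge outside `C` with `e({x,y}, C) ≥ r + 1`, then the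
subgraph induced by `V(C) ∪ {x, y}` contains a feasible cycle `C′` with
`M₀(C′) = M₀(C) ∪ {xy}`. -/
theorem stmt4 (n : ℕ) (G : SimpleGraph (Fin n ⊕ Fin n))
    (hX : ∀ i j : Fin n, ¬ G.Adj (Sum.inl i) (Sum.inl j))
    (hY : ∀ i j : Fin n, ¬ G.Adj (Sum.inr i) (Sum.inr j))
    (hM : ∀ i : Fin n, G.Adj (Sum.inl i) (Sum.inr i))
    (S : Finset (Fin n))
    (l : List (Fin n)) (hC : AltCycle G l) (hfeas : 2 ≤ (l.toFinset ∩ S).card)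
    (a : Fin n) (haS : a ∈ S) (hal : a ∉ l)
    (he : l.length + 1 ≤
      eBtw G ({Sum.inl a, Sum.inr a} : Set (Fin n ⊕ Fin n)) (iVerts {i | i ∈ l})) :
    ∃ l' : List (Fin n), AltCycle G l' ∧
      (∀ b ∈ l', b ∈ l ∨ b = a) ∧
      l'.toFinset ∩ S = insert a (l.toFinset ∩ S) :=
  stmt4_general n G hX hY S l hC a haS hal he
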